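/- arXiv:2406.06630 — 3 statements merged into one kernel-verified Lean document; each statement's English description precedes it below -/
import Mathlib

section
/- Let g : J × I → ℝ be Lipschitz continuous with ε ≤ g ≤ K on the closed ball around x₂ of radius b times I, where 0 < ε ≤ K and x₂ - x₁ ∈ (0, (b/K)ε). Then for every continuous prehistory φ : [-h,0] → I with h = b/K, the initial value problem y'(s) = -g(y(s), φ(-s)), y(0) = x₂ has a unique solution y_φ on [0,h], and there is a unique τ(φ) ∈ [0,h] with y_φ(τ(φ)) = x₁. -/
open Set Metric Filter Topology

/-!
Since `ε ≤ g ≤ K` on `B̄(x₂, b) × I`, the field `(s, x) ↦ -g(x, φ(-s))` satisfies the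
Picard–Lindelöf hypotheses on the ball for the time `h = b / K`, which gives a solution. Any
solution moves with speed at most `K` while it is inside the ball, so by continuous induction it
cannot leave the ball before time `h`; Lipschitz uniqueness therefore applies to all solutions.
Finally `y' ≤ -ε`, so `y` decreases strictly from `x₂` to `y h ≤ x₂ - ε h < x₁`, and the
intermediate value theorem gives the unique `τ`.
-/

theorem HasDerivWithinAt.Ici_of_Icc {E : Type*} [NormedAddCommGroup E] [NormedSpace ℝ E]
    {f : ℝ → E} {f' : E} {a b t : ℝ} (hf : HasDerivWithinAt f f' (Icc a b) t)
    (ht : t ∈ Ico a b) : HasDerivWithinAt f f' (Ici t) t :=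
  hf.mono_of_mem_nhdsWithin (Icc_mem_nhdsGE_of_mem ht)

theorem norm_image_sub_le_of_norm_deriv_right_le_on_ball {E : Type*} [NormedAddCommGroup E]
    [NormedSpace ℝ E] {f f' : ℝ → E} {a b C r : ℝ} (hC : 0 < C) (hr : C * (b - a) ≤ r)
    (hf : ContinuousOn f (Icc a b)) (hf' : ∀ t ∈ Ico a b, HasDerivWithinAt f (f' t) (Ici t) t)
    (bound : ∀ t ∈ Ico a b, f t ∈ ball (f a) r → ‖f' t‖ ≤ C) :
    ∀ t ∈ Icc a b, ‖f t - f a‖ ≤ C * (t - a) := by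
  set s := {t | ‖f t - f a‖ ≤ C * (t - a)}
  have hs : IsClosed (s ∩ Icc a b) := inter_comm (Icc a b) s ▸
    ((hf.sub continuousOn_const).norm.prodMk ((continuous_const_mul C).comp
      (continuous_sub_right a)).continuousOn).preimage_isClosed_of_isClosed
        isClosed_Icc isClosed_le_prod
  refine fun t ht ↦ hs.Icc_subset_of_forall_mem_nhdsWithin (by simp [s]) ?_ ht
  rintro x ⟨hxs, hx⟩
  have hxball : f x ∈ ball (f a) r := by
    rw [mem_ball, dist_eq_norm]
    calc ‖f x - f a‖ ≤ C * (x - a) := hxs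
      _ < C * (b - a) := by gcongr; exact hx.2
      _ ≤ r := hr
  have hnear : ∀ᶠ t in 𝓝[≥] x, t ∈ Ico a b ∧ f t ∈ ball (f a) r :=
    (show ∀ᶠ t in 𝓝[≥] x, t ∈ Ico a b from Ico_mem_nhdsGE_of_mem hx).and <|
      ((hf x (Ico_subset_Icc_self hx)).mono_of_mem_nhdsWithin
        (Icc_mem_nhdsGE_of_mem hx)).eventually (isOpen_ball.mem_nhds hxball)
  obtain ⟨u, hxu, hu⟩ := mem_nhdsGE_iff_exists_Ico_subset.1 hnear
  refine mem_of_superset (Ioo_mem_nhdsGT hxu) fun t ht ↦ ?_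
  have htb : t < b := (hu ⟨ht.1.le, ht.2⟩).1.2
  have hstep : ‖f t - f x‖ ≤ C * (t - x) :=
    norm_image_sub_le_of_norm_deriv_right_le_segment
      (hf.mono (Icc_subset_Icc hx.1 htb.le))
      (fun y hy ↦ hf' y ⟨hx.1.trans hy.1, hy.2.trans htb⟩)
      (fun y hy ↦ bound y ⟨hx.1.trans hy.1, hy.2.trans htb⟩ (hu ⟨hy.1, hy.2.trans ht.2⟩).2)
      t ⟨ht.1.le, le_rfl⟩
  calc ‖f t - f a‖ ≤ ‖f t - f x‖ + ‖f x - f a‖ := norm_sub_le_norm_sub_add_norm_sub _ _ _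
    _ ≤ C * (t - x) + C * (x - a) := add_le_add hstep hxs
    _ = C * (t - a) := by ring

theorem mapsTo_closedBall_of_hasDerivWithinAt {E : Type*} [NormedAddCommGroup E]
    [NormedSpace ℝ E] {v : ℝ → E → E} {f : ℝ → E} {x₀ : E} {a b C r : ℝ} (hC : 0 < C)
    (hr : C * (b - a) ≤ r) (hv : ∀ t ∈ Ico a b, ∀ x ∈ ball x₀ r, ‖v t x‖ ≤ C)
    (hf : ∀ t ∈ Icc a b, HasDerivWithinAt f (v t (f t)) (Icc a b) t) (ha : f a = x₀) :
    MapsTo f (Icc a b) (closedBall x₀ r) := by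
  intro t ht
  subst ha
  rw [mem_closedBall, dist_eq_norm]
  calc ‖f t - f a‖
      ≤ C * (t - a) := norm_image_sub_le_of_norm_deriv_right_le_on_ball hC hr
        (HasDerivWithinAt.continuousOn hf)
        (fun t ht ↦ (hf t (Ico_subset_Icc_self ht)).Ici_of_Icc ht) (fun t ht ↦ hv t ht _) t ht
    _ ≤ C * (b - a) := by gcongr; exact ht.2
    _ ≤ r := hr

theorem eqOn_Icc_of_hasDerivWithinAt_of_mapsTo {E : Type*} [NormedAddCommGroup E]
    [NormedSpace ℝ E] {v : ℝ → E → E} {f g : ℝ → E} {s : Set E} {a b : ℝ} {L : NNReal}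
    (hv : ∀ t ∈ Ico a b, LipschitzOnWith L (v t) s)
    (hf : ∀ t ∈ Icc a b, HasDerivWithinAt f (v t (f t)) (Icc a b) t) (hfs : MapsTo f (Icc a b) s)
    (hg : ∀ t ∈ Icc a b, HasDerivWithinAt g (v t (g t)) (Icc a b) t) (hgs : MapsTo g (Icc a b) s)
    (ha : f a = g a) : EqOn f g (Icc a b) :=
  ODE_solution_unique_of_mem_Icc_right (s := fun _ ↦ s) hv (HasDerivWithinAt.continuousOn hf)
    (fun t ht ↦ (hf t (Ico_subset_Icc_self ht)).Ici_of_Icc ht)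
    (fun _ ht ↦ hfs (Ico_subset_Icc_self ht)) (HasDerivWithinAt.continuousOn hg)
    (fun t ht ↦ (hg t (Ico_subset_Icc_self ht)).Ici_of_Icc ht)
    (fun _ ht ↦ hgs (Ico_subset_Icc_self ht)) ha

theorem existsUnique_mem_Icc_eq_of_hasDerivWithinAt_le_neg {f f' : ℝ → ℝ} {a b c ε : ℝ}
    (hε : 0 < ε) (hf : ∀ t ∈ Icc a b, HasDerivWithinAt f (f' t) (Icc a b) t)
    (hf' : ∀ t ∈ Icc a b, f' t ≤ -ε) (hc : f a - c ∈ Ico 0 (ε * (b - a))) :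
    ∃! τ, τ ∈ Icc a b ∧ f τ = c := by
  have hab : a < b := by nlinarith [hc.1, hc.2]
  have hcont : ContinuousOn f (Icc a b) := HasDerivWithinAt.continuousOn hf
  have hanti : StrictAntiOn f (Icc a b) := by
    refine strictAntiOn_of_hasDerivWithinAt_neg (convex_Icc a b) hcont (f' := f') ?_ ?_ <;>
      rw [interior_Icc] <;> intro t ht
    · exact (hf t (Ioo_subset_Icc_self ht)).mono Ioo_subset_Icc_self
    · linarith [hf' t (Ioo_subset_Icc_self ht)]
  have hfb : f b ≤ f a - ε * (b - a) := by
    refine image_le_of_deriv_right_le_deriv_boundary hcont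
      (fun t ht ↦ (hf t (Ico_subset_Icc_self ht)).Ici_of_Icc ht)
      (B := fun t ↦ f a - ε * (t - a)) (B' := fun _ ↦ -ε)
      (by simp) (by fun_prop) (fun t _ ↦ ?_) (fun t ht ↦ hf' t (Ico_subset_Icc_self ht))
      (right_mem_Icc.2 hab.le)
    simpa using (((hasDerivAt_id t).sub_const a).const_mul ε).const_sub (f a) |>.hasDerivWithinAt
  obtain ⟨τ, hτ, hfτ⟩ :=
    intermediate_value_Icc' hab.le hcont (show c ∈ Icc (f b) (f a) from
      ⟨by linarith [hc.2], by linarith [hc.1]⟩)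
  exact ⟨τ, ⟨hτ, hfτ⟩, fun σ ⟨hσ, hfσ⟩ ↦ hanti.injOn hσ hτ (hfσ.trans hfτ.symm)⟩

theorem isPicardLindelof_neg_of_lipschitzOnWith_uncurry {g : ℝ → ℝ → ℝ} {u : ℝ → ℝ}
    {I J : Set ℝ} {L r M : NNReal} {x₀ tmin tmax : ℝ} (t₀ : Icc tmin tmax)
    (hball : closedBall x₀ r ⊆ J) (hg : LipschitzOnWith L (Function.uncurry g) (J ×ˢ I))
    (hu : ContinuousOn u (Icc tmin tmax)) (huI : MapsTo u (Icc tmin tmax) I)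
    (hgM : ∀ t ∈ Icc tmin tmax, ∀ x ∈ closedBall x₀ r, |g x (u t)| ≤ M)
    (hMr : M * max (tmax - t₀) (t₀ - tmin) ≤ r) :
    IsPicardLindelof (fun t x ↦ -g x (u t)) t₀ x₀ r 0 M L where
  lipschitzOnWith t ht := by
    have : LipschitzOnWith L (g · (u t)) (closedBall x₀ r) := by
      simpa [Function.comp_def] using hg.comp (LipschitzWith.prodMk_right (u t)).lipschitzOnWith
        fun x hx ↦ ⟨hball hx, huI ht⟩
    exact this.neg
  continuousOn x hx := by
    have : LipschitzOnWith L (g x) I := by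
      simpa [Function.comp_def] using hg.comp (LipschitzWith.prodMk_left x).lipschitzOnWith
        fun z hz ↦ ⟨hball hx, hz⟩
    exact (this.continuousOn.comp hu huI).neg
  norm_le t ht x hx := by simpa using hgM t ht x hx
  mul_max_le := by simpa using hMr

theorem tau_and_y_well_defined_general
    (I J : Set ℝ)
    (x₁ x₂ b ε K : ℝ) (L : NNReal) (hb : 0 < b)
    (hball : Metric.closedBall x₂ b ⊆ J)
    (g : ℝ → ℝ → ℝ)
    (hgLip : LipschitzOnWith L (fun p : ℝ × ℝ => g p.1 p.2) (J ×ˢ I))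
    (hε : 0 < ε) (hεK : ε ≤ K)
    (hbd : ∀ x ∈ Metric.closedBall x₂ b, ∀ z ∈ I, ε ≤ g x z ∧ g x z ≤ K)
    (hgap : x₂ - x₁ ∈ Ioo 0 (b / K * ε))
    (φ : ℝ → ℝ) (hφc : ContinuousOn φ (Icc (-(b / K)) 0))
    (hφI : ∀ t ∈ Icc (-(b / K)) 0, φ t ∈ I) :
    ∃ y : ℝ → ℝ,
      (y 0 = x₂ ∧
        ∀ s ∈ Icc (0 : ℝ) (b / K),
          HasDerivWithinAt y (-(g (y s) (φ (-s)))) (Icc (0 : ℝ) (b / K)) s) ∧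
      (∀ z : ℝ → ℝ, z 0 = x₂ →
        (∀ s ∈ Icc (0 : ℝ) (b / K),
          HasDerivWithinAt z (-(g (z s) (φ (-s)))) (Icc (0 : ℝ) (b / K)) s) →
        ∀ s ∈ Icc (0 : ℝ) (b / K), z s = y s) ∧
      (∃! τ : ℝ, τ ∈ Icc (0 : ℝ) (b / K) ∧ y τ = x₁) := by
  set h := b / K
  have hK : 0 < K := hε.trans_le hεK
  have hh : 0 < h := div_pos hb hK
  have hKh : K * h = b := mul_div_cancel₀ b hK.ne'
  have hneg : MapsTo (fun t ↦ -t) (Icc 0 h) (Icc (-h) 0) :=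
    fun t ht ↦ ⟨neg_le_neg ht.2, neg_nonpos.2 ht.1⟩
  have hφI' : MapsTo (fun t ↦ φ (-t)) (Icc 0 h) I := fun t ht ↦ hφI _ (hneg ht)
  have hgK : ∀ t ∈ Icc 0 h, ∀ x ∈ closedBall x₂ b, |g x (φ (-t))| ≤ K := fun t ht x hx ↦
    abs_le.2 ⟨by linarith [hbd x hx _ (hφI' ht)], (hbd x hx _ (hφI' ht)).2⟩
  have hpl := isPicardLindelof_neg_of_lipschitzOnWith_uncurry (r := ⟨b, hb.le⟩)
    (M := ⟨K, hK.le⟩) ⟨0, le_rfl, hh.le⟩ hball hgLip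
    (hφc.comp continuousOn_neg hneg) hφI' hgK
    (show K * max (h - 0) (0 - 0) ≤ b by rw [sub_zero, sub_self, max_eq_left hh.le, hKh])
  obtain ⟨y, hy0, hy⟩ := hpl.exists_eq_forall_mem_Icc_hasDerivWithinAt₀
  have hmaps : ∀ z : ℝ → ℝ, z 0 = x₂ →
      (∀ s ∈ Icc 0 h, HasDerivWithinAt z (-(g (z s) (φ (-s)))) (Icc 0 h) s) →
      MapsTo z (Icc 0 h) (closedBall x₂ b) := fun z hz0 hz ↦
    mapsTo_closedBall_of_hasDerivWithinAt (v := fun t x ↦ -g x (φ (-t))) hK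
      (by rw [sub_zero, hKh])
      (fun t ht x hx ↦ by simpa using hgK t (Ico_subset_Icc_self ht) x (ball_subset_closedBall hx))
      hz hz0
  refine ⟨y, ⟨hy0, hy⟩, fun z hz0 hz s hs ↦ ?_, ?_⟩
  · exact eqOn_Icc_of_hasDerivWithinAt_of_mapsTo
      (fun t ht ↦ hpl.lipschitzOnWith t (Ico_subset_Icc_self ht))
      hz (hmaps z hz0 hz) hy (hmaps y hy0 hy) (hz0.trans hy0.symm) hs
  · refine existsUnique_mem_Icc_eq_of_hasDerivWithinAt_le_neg hε hy
      (fun t ht ↦ neg_le_neg (hbd _ (hmaps y hy0 hy ht) _ (hφI' ht)).1) ?_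
    rw [hy0, sub_zero, mul_comm]
    exact Ioo_subset_Ico_self hgap

/-- Remark 2.4 (`τ` and `y` are well-defined): under the basic assumptions on `g`
(Lipschitz on `J × I`, `ε ≤ g ≤ K` on `B̄(x₂,b) × I`, `x₂ - x₁ ∈ (0, (b/K)ε)`),
for every continuous prehistory `φ : [-h,0] → I` with `h = b/K` the IVP
`y'(s) = -g(y(s), φ(-s))`, `y(0) = x₂` has a unique solution on `[0,h]`, and there is a
unique `τ(φ) ∈ [0,h]` with `y(τ(φ)) = x₁`. -/
theorem tau_and_y_well_defined
    (I J : Set ℝ) (hIopen : IsOpen I) (hJopen : IsOpen J)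
    (x₁ x₂ b ε K : ℝ) (L : NNReal) (hx12 : x₁ < x₂) (hb : 0 < b)
    (hball : Metric.closedBall x₂ b ⊆ J)
    (g : ℝ → ℝ → ℝ)
    (hgLip : LipschitzOnWith L (fun p : ℝ × ℝ => g p.1 p.2) (J ×ˢ I))
    (hε : 0 < ε) (hεK : ε ≤ K)
    (hbd : ∀ x ∈ Metric.closedBall x₂ b, ∀ z ∈ I, ε ≤ g x z ∧ g x z ≤ K)
    (hgap : x₂ - x₁ ∈ Ioo 0 (b / K * ε))
    (φ : ℝ → ℝ) (hφc : ContinuousOn φ (Icc (-(b / K)) 0))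
    (hφI : ∀ t ∈ Icc (-(b / K)) 0, φ t ∈ I) :
    ∃ y : ℝ → ℝ,
      (y 0 = x₂ ∧
        ∀ s ∈ Icc (0 : ℝ) (b / K),
          HasDerivWithinAt y (-(g (y s) (φ (-s)))) (Icc (0 : ℝ) (b / K)) s) ∧
      (∀ z : ℝ → ℝ, z 0 = x₂ →
        (∀ s ∈ Icc (0 : ℝ) (b / K),
          HasDerivWithinAt z (-(g (z s) (φ (-s)))) (Icc (0 : ℝ) (b / K)) s) →
        ∀ s ∈ Icc (0 : ℝ) (b / K), z s = y s) ∧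
      (∃! τ : ℝ, τ ∈ Icc (0 : ℝ) (b / K) ∧ y τ = x₁) :=
  tau_and_y_well_defined_general I J x₁ x₂ b ε K L hb hball g hgLip hε hεK hbd hgap φ hφc hφI
end

section
/- The delay function τ : H^1(-h,0;ℝ) → [0,h] defined implicitly by y_φ(τ(φ)) = x₁ is Lipschitz continuous with respect to the H^1 norm; explicitly, ε |τ(φ) - τ(ψ)| ≤ (L²(h^{1/2} + h^{-1/2}) ∫₀^h t e^{Lt} dt + L√h) ‖φ - ψ‖_{H^1(-h,0;ℝ)}. -/
/-!
Since `g ≥ ε` along the solutions, each `y` decreases at rate at least `ε`, so `ε |τ(φ) - τ(ψ)|`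
is at most `|y_φ - y_ψ|` evaluated at the smaller of the two delays. Writing `y_φ - y_ψ` as the
integral of `g(y_ψ, ψ(-·)) - g(y_φ, φ(-·))`, the Lipschitz bound leaves two terms:
`L |y_φ - y_ψ|`, which Grönwall bounds by `L C (e^{Ls} - 1) ≤ L² C s e^{Ls}` with
`C = ‖φ - ψ‖_∞`, and `L |φ - ψ|`, whose integral Cauchy–Schwarz bounds by `L √h ‖φ - ψ‖_{L²}`.
The Sobolev bound `‖φ - ψ‖_∞ ≤ (√h + 1/√h) ‖φ - ψ‖_{H¹}` finishes the estimate.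
-/

open MeasureTheory Set intervalIntegral

theorem intervalIntegral.integral_abs_le_sqrt_mul_sqrt {a b : ℝ} (hab : a ≤ b) {f : ℝ → ℝ}
    (hf : IntervalIntegrable f volume a b)
    (hf2 : IntervalIntegrable (fun t => f t ^ 2) volume a b) :
    ∫ t in a..b, |f t| ≤ √(b - a) * √(∫ t in a..b, f t ^ 2) := by
  have hmem : MemLp (fun t => |f t|) (ENNReal.ofReal 2) (volume.restrict (Ioc a b)) := by
    rw [ENNReal.ofReal_ofNat, memLp_two_iff_integrable_sq hf.1.abs.aestronglyMeasurable]
    simp only [sq_abs]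
    exact hf2.1
  have := integral_mul_le_Lp_mul_Lq_of_nonneg Real.HolderConjugate.two_two
    (.of_forall fun _ => zero_le_one) (.of_forall fun t => abs_nonneg (f t))
    (memLp_const (1 : ℝ)) hmem
  simp only [one_mul, one_pow, Real.rpow_two, sq_abs] at this
  rw [integral_of_le hab, integral_of_le hab, Real.sqrt_eq_rpow, Real.sqrt_eq_rpow]
  simpa [hab] using this

section Sobolev

variable {a b : ℝ} {f f' : ℝ → ℝ}

theorem continuousOn_of_forall_eq_add_integral (hab : a ≤ b)
    (hftc : ∀ s ∈ Icc a b, ∀ t ∈ Icc a b, f t = f s + ∫ u in s..t, f' u)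
    (hf' : IntervalIntegrable f' volume a b) : ContinuousOn f (Icc a b) := by
  have hprim := continuousOn_primitive_interval' hf' (left_mem_uIcc (a := a) (b := b))
  rw [uIcc_of_le hab] at hprim
  exact (continuousOn_const.add hprim).congr fun t ht => hftc a (left_mem_Icc.2 hab) t ht

theorem forall_eq_add_integral_sub {g g' : ℝ → ℝ} (hab : a ≤ b)
    (hf : ∀ s ∈ Icc a b, ∀ t ∈ Icc a b, f t = f s + ∫ u in s..t, f' u)
    (hg : ∀ s ∈ Icc a b, ∀ t ∈ Icc a b, g t = g s + ∫ u in s..t, g' u)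
    (hf' : IntervalIntegrable f' volume a b) (hg' : IntervalIntegrable g' volume a b) :
    ∀ s ∈ Icc a b, ∀ t ∈ Icc a b,
      f t - g t = f s - g s + ∫ u in s..t, (f' u - g' u) := by
  intro s hs t ht
  have hsub : uIcc s t ⊆ uIcc a b := by rw [uIcc_of_le hab]; exact uIcc_subset_Icc hs ht
  rw [integral_sub (hf'.mono_set hsub) (hg'.mono_set hsub), hf s hs t ht, hg s hs t ht]
  ring

theorem abs_le_of_forall_eq_add_integral (hab : a < b)
    (hftc : ∀ s ∈ Icc a b, ∀ t ∈ Icc a b, f t = f s + ∫ u in s..t, f' u)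
    (hf' : IntervalIntegrable f' volume a b)
    (hf2 : IntervalIntegrable (fun t => f t ^ 2) volume a b)
    (hf'2 : IntervalIntegrable (fun t => f' t ^ 2) volume a b) {t : ℝ} (ht : t ∈ Icc a b) :
    |f t| ≤ (√(b - a) + (√(b - a))⁻¹) *
      √((∫ u in a..b, f u ^ 2) + ∫ u in a..b, f' u ^ 2) := by
  have hsqrt : 0 < √(b - a) := Real.sqrt_pos.2 (sub_pos.2 hab)
  obtain ⟨s, hs, hmin⟩ := isCompact_Icc.exists_isMinOn (nonempty_Icc.2 hab.le)
    (continuous_abs.comp_continuousOn (continuousOn_of_forall_eq_add_integral hab.le hftc hf'))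
  have hfs : |f s| ≤ (√(b - a))⁻¹ * √(∫ u in a..b, f u ^ 2) := by
    have hsq : (b - a) * |f s| ^ 2 ≤ ∫ u in a..b, f u ^ 2 := by
      have := integral_mono_on (f := fun _ => |f s| ^ 2) hab.le intervalIntegrable_const hf2
        fun u hu => by rw [← sq_abs (f u)]; exact pow_le_pow_left₀ (abs_nonneg _) (hmin hu) 2
      simpa only [intervalIntegral.integral_const, smul_eq_mul] using this
    rw [le_inv_mul_iff₀ hsqrt, ← Real.sqrt_sq (abs_nonneg (f s)),
      ← Real.sqrt_mul (sub_pos.2 hab).le]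
    exact Real.sqrt_le_sqrt hsq
  have hint : |∫ u in s..t, f' u| ≤ ∫ u in a..b, |f' u| := by
    have hsub : uIoc s t ⊆ Ioc a b := by
      rw [uIoc]; exact Ioc_subset_Ioc (le_min hs.1 ht.1) (max_le hs.2 ht.2)
    calc |∫ u in s..t, f' u| ≤ |(∫ u in s..t, |f' u|)| := by
          simpa only [Real.norm_eq_abs] using
            norm_integral_le_abs_integral_norm (f := f') (μ := volume)
      _ ≤ |(∫ u in a..b, |f' u|)| := abs_integral_mono_interval (by rwa [uIoc_of_le hab.le])
          (.of_forall fun u => abs_nonneg _) hf'.abs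
      _ = ∫ u in a..b, |f' u| := abs_of_nonneg (integral_nonneg hab.le fun u _ => abs_nonneg _)
  calc |f t| = |f s + ∫ u in s..t, f' u| := by rw [← hftc s hs t ht]
    _ ≤ |f s| + |∫ u in s..t, f' u| := abs_add_le _ _
    _ ≤ (√(b - a))⁻¹ * √(∫ u in a..b, f u ^ 2) + √(b - a) * √(∫ u in a..b, f' u ^ 2) :=
      add_le_add hfs (hint.trans (integral_abs_le_sqrt_mul_sqrt hab.le hf' hf'2))
    _ ≤ _ := by
      have h0 : ∀ g : ℝ → ℝ, 0 ≤ ∫ u in a..b, g u ^ 2 := fun g =>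
        integral_nonneg hab.le fun u _ => sq_nonneg (g u)
      rw [add_mul, add_comm]
      gcongr
      exacts [le_add_of_nonneg_left (h0 f), le_add_of_nonneg_right (h0 f')]

end Sobolev

theorem Real.exp_sub_one_le_mul_exp (x : ℝ) : Real.exp x - 1 ≤ x * Real.exp x := by
  have h := mul_le_mul_of_nonneg_left (one_sub_le_exp_neg x) (Real.exp_pos x).le
  rw [← Real.exp_add, add_neg_cancel, Real.exp_zero] at h
  linarith

theorem gronwallBound_zero_mul (K C x : ℝ) :
    gronwallBound 0 K (K * C) x = C * (Real.exp (K * x) - 1) := by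
  rcases eq_or_ne K 0 with rfl | hK
  · simp [gronwallBound_K0]
  · simp only [gronwallBound_of_K_ne_0 hK, mul_div_cancel_left₀ C hK, zero_mul, zero_add]

theorem continuous_uncurry_of_abs_sub_le {g : ℝ → ℝ → ℝ} {L : ℝ} (hL : 0 ≤ L)
    (hg : ∀ x z x' z', |g x z - g x' z'| ≤ L * (|x - x'| + |z - z'|)) :
    Continuous (Function.uncurry g) := by
  refine (LipschitzWith.of_dist_le' (K := 2 * L) fun p q => ?_).continuous
  rw [Prod.dist_eq, Real.dist_eq, Real.dist_eq, Real.dist_eq]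
  calc |g p.1 p.2 - g q.1 q.2| ≤ L * (|p.1 - q.1| + |p.2 - q.2|) := hg _ _ _ _
    _ ≤ 2 * L * max |p.1 - q.1| |p.2 - q.2| := by
      rw [mul_comm 2 L, mul_assoc, two_mul]
      gcongr
      exacts [le_max_left _ _, le_max_right _ _]

section Calculus

variable {y G : ℝ → ℝ} {a b : ℝ}

theorem integral_eq_sub_of_hasDerivWithinAt_Icc (hG : ContinuousOn G (Icc a b))
    (hy : ∀ s ∈ Icc a b, HasDerivWithinAt y (G s) (Icc a b) s) {u v : ℝ}
    (hu : a ≤ u) (huv : u ≤ v) (hv : v ≤ b) : ∫ s in u..v, G s = y v - y u := by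
  have hsub : Icc u v ⊆ Icc a b := Icc_subset_Icc hu hv
  refine integral_eq_sub_of_hasDerivAt_of_le huv
    (fun s hs => (hy s (hsub hs)).continuousWithinAt.mono hsub) (fun s hs => ?_)
    ((hG.mono hsub).intervalIntegrable_of_Icc huv)
  exact (hy s (hsub (Ioo_subset_Icc_self hs))).hasDerivAt
    (Icc_mem_nhds (hu.trans_lt hs.1) (hs.2.trans_le hv))

theorem mul_sub_le_sub_of_hasDerivWithinAt {ε : ℝ}
    (hy : ∀ s ∈ Icc a b, HasDerivWithinAt y (-G s) (Icc a b) s) (hG : ∀ s ∈ Ioo a b, ε ≤ G s)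
    {u v : ℝ} (hu : u ∈ Icc a b) (hv : v ∈ Icc a b) (huv : u ≤ v) :
    ε * (v - u) ≤ y u - y v := by
  have hderiv : ∀ s ∈ Icc a b, HasDerivWithinAt (fun s => y s + s * ε) (-G s + ε) (Icc a b) s :=
    fun s hs => (hy s hs).add (hasDerivAt_mul_const ε).hasDerivWithinAt
  have hanti : AntitoneOn (fun s => y s + s * ε) (Icc a b) := by
    refine antitoneOn_of_hasDerivWithinAt_nonpos (f' := fun s => -G s + ε) (convex_Icc a b)
      (fun s hs => (hderiv s hs).continuousWithinAt) (fun s hs => ?_) (fun s hs => ?_) <;>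
      simp only [interior_Icc] at hs ⊢
    · exact (hderiv s (Ioo_subset_Icc_self hs)).mono Ioo_subset_Icc_self
    · linarith [hG s hs]
  linarith [hanti hu hv huv]

end Calculus

section Stability

variable {g : ℝ → ℝ → ℝ} {L C h : ℝ} {y₁ y₂ p₁ p₂ : ℝ → ℝ} (hL : 0 ≤ L)
  (hg : ∀ x z x' z', |g x z - g x' z'| ≤ L * (|x - x'| + |z - z'|))
  (hy₁ : ∀ s ∈ Icc 0 h, HasDerivWithinAt y₁ (-g (y₁ s) (p₁ s)) (Icc 0 h) s)
  (hy₂ : ∀ s ∈ Icc 0 h, HasDerivWithinAt y₂ (-g (y₂ s) (p₂ s)) (Icc 0 h) s)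
  (h0 : y₁ 0 = y₂ 0) (hp : ∀ s ∈ Icc 0 h, |p₁ s - p₂ s| ≤ C)
include hL hg hy₁ hy₂ h0 hp

theorem abs_sub_le_mul_exp_sub_one {s : ℝ} (hs : s ∈ Icc 0 h) :
    |y₁ s - y₂ s| ≤ C * (Real.exp (L * s) - 1) := by
  have hderiv : ∀ s ∈ Ico 0 h, HasDerivWithinAt (fun s => y₁ s - y₂ s)
      (-g (y₁ s) (p₁ s) - -g (y₂ s) (p₂ s)) (Ici s) s := fun s hs =>
    ((hy₁ s (Ico_subset_Icc_self hs)).sub (hy₂ s (Ico_subset_Icc_self hs))).mono_of_mem_nhdsWithin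
      (Icc_mem_nhdsGE_of_mem hs)
  have hbound : ∀ s ∈ Ico 0 h,
      ‖-g (y₁ s) (p₁ s) - -g (y₂ s) (p₂ s)‖ ≤ L * ‖y₁ s - y₂ s‖ + L * C := by
    intro s hs
    rw [Real.norm_eq_abs, Real.norm_eq_abs, neg_sub_neg, abs_sub_comm]
    calc |g (y₁ s) (p₁ s) - g (y₂ s) (p₂ s)| ≤ L * (|y₁ s - y₂ s| + |p₁ s - p₂ s|) := hg _ _ _ _
      _ ≤ L * |y₁ s - y₂ s| + L * C := by
        rw [mul_add]; gcongr; exact hp s (Ico_subset_Icc_self hs)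
  have := norm_le_gronwallBound_of_norm_deriv_right_le (δ := 0)
    (fun s hs => ((hy₁ s hs).sub (hy₂ s hs)).continuousWithinAt) hderiv (by simp [h0]) hbound s hs
  rwa [sub_zero, gronwallBound_zero_mul, Real.norm_eq_abs] at this

theorem abs_sub_le_sq_mul_mul_exp {s : ℝ} (hs : s ∈ Icc 0 h) :
    |g (y₁ s) (p₁ s) - g (y₂ s) (p₂ s)| ≤
      L ^ 2 * C * (s * Real.exp (L * s)) + L * |p₁ s - p₂ s| := by
  have hC : 0 ≤ C := (abs_nonneg _).trans (hp s hs)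
  have hy : |y₁ s - y₂ s| ≤ C * (L * s * Real.exp (L * s)) :=
    (abs_sub_le_mul_exp_sub_one hL hg hy₁ hy₂ h0 hp hs).trans
      (mul_le_mul_of_nonneg_left (Real.exp_sub_one_le_mul_exp _) hC)
  calc |g (y₁ s) (p₁ s) - g (y₂ s) (p₂ s)| ≤ L * (|y₁ s - y₂ s| + |p₁ s - p₂ s|) := hg _ _ _ _
    _ ≤ L * (C * (L * s * Real.exp (L * s)) + |p₁ s - p₂ s|) := by gcongr
    _ = _ := by ring

theorem abs_sub_le_integral (hp₁ : ContinuousOn p₁ (Icc 0 h)) (hp₂ : ContinuousOn p₂ (Icc 0 h))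
    {t : ℝ} (ht : t ∈ Icc 0 h) :
    |y₁ t - y₂ t| ≤ L ^ 2 * C * (∫ s in 0..h, s * Real.exp (L * s)) +
      L * ∫ s in 0..h, |p₁ s - p₂ s| := by
  have hC : 0 ≤ C := (abs_nonneg _).trans (hp t ht)
  have hth : Icc 0 t ⊆ Icc 0 h := Icc_subset_Icc_right ht.2
  have hgc := continuous_uncurry_of_abs_sub_le hL hg
  have hG₁ : ContinuousOn (fun s => -g (y₁ s) (p₁ s)) (Icc 0 h) :=
    (hgc.comp_continuousOn (ContinuousOn.prodMk (fun s hs => (hy₁ s hs).continuousWithinAt)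
      hp₁)).neg
  have hG₂ : ContinuousOn (fun s => -g (y₂ s) (p₂ s)) (Icc 0 h) :=
    (hgc.comp_continuousOn (ContinuousOn.prodMk (fun s hs => (hy₂ s hs).continuousWithinAt)
      hp₂)).neg
  have hrepr : y₁ t - y₂ t = ∫ s in 0..t, (-g (y₁ s) (p₁ s) - -g (y₂ s) (p₂ s)) := by
    rw [integral_sub ((hG₁.mono hth).intervalIntegrable_of_Icc ht.1)
      ((hG₂.mono hth).intervalIntegrable_of_Icc ht.1),
      integral_eq_sub_of_hasDerivWithinAt_Icc hG₁ hy₁ le_rfl ht.1 ht.2,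
      integral_eq_sub_of_hasDerivWithinAt_Icc hG₂ hy₂ le_rfl ht.1 ht.2, h0]
    ring
  set B : ℝ → ℝ := fun s => L ^ 2 * C * (s * Real.exp (L * s)) + L * |p₁ s - p₂ s|
  have hB : ContinuousOn B (Icc 0 h) := by fun_prop
  have hB₀ : ∀ s ∈ Icc 0 h, 0 ≤ B s := fun s hs =>
    add_nonneg (by have := hs.1; positivity) (by positivity)
  calc |y₁ t - y₂ t| ≤ ∫ s in 0..t, |-g (y₁ s) (p₁ s) - -g (y₂ s) (p₂ s)| :=
        hrepr ▸ abs_integral_le_integral_abs ht.1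
    _ ≤ ∫ s in 0..t, B s := by
        refine integral_mono_on ht.1 (((hG₁.sub hG₂).abs.mono hth).intervalIntegrable_of_Icc ht.1)
          ((hB.mono hth).intervalIntegrable_of_Icc ht.1) fun s hs => ?_
        rw [neg_sub_neg, abs_sub_comm]
        exact abs_sub_le_sq_mul_mul_exp hL hg hy₁ hy₂ h0 hp ⟨hs.1, hs.2.trans ht.2⟩
    _ ≤ ∫ s in 0..h, B s :=
        integral_mono_interval le_rfl ht.1 ht.2 ((ae_restrict_iff' measurableSet_Ioc).2
          (.of_forall fun s hs => hB₀ s ⟨hs.1.le, hs.2⟩))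
          (hB.intervalIntegrable_of_Icc (ht.1.trans ht.2))
    _ = _ := by
        rw [intervalIntegral.integral_add, intervalIntegral.integral_const_mul,
          intervalIntegral.integral_const_mul]
        · exact Continuous.intervalIntegrable (by fun_prop) _ _
        · exact ((hp₁.sub hp₂).abs.const_smul L).intervalIntegrable_of_Icc (ht.1.trans ht.2)

theorem mul_abs_sub_le_of_apply_eq {ε τ₁ τ₂ : ℝ}
    (hp₁ : ContinuousOn p₁ (Icc 0 h)) (hp₂ : ContinuousOn p₂ (Icc 0 h))
    (hε₁ : ∀ s ∈ Ioo 0 h, ε ≤ g (y₁ s) (p₁ s)) (hε₂ : ∀ s ∈ Ioo 0 h, ε ≤ g (y₂ s) (p₂ s))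
    (hτ₁ : τ₁ ∈ Icc 0 h) (hτ₂ : τ₂ ∈ Icc 0 h) (hτ : y₁ τ₁ = y₂ τ₂) :
    ε * |τ₁ - τ₂| ≤ L ^ 2 * C * (∫ s in 0..h, s * Real.exp (L * s)) +
      L * ∫ s in 0..h, |p₁ s - p₂ s| := by
  have hstab := fun t (ht : t ∈ Icc 0 h) => abs_sub_le_integral hL hg hy₁ hy₂ h0 hp hp₁ hp₂ ht
  rcases le_total τ₂ τ₁ with hle | hle
  · rw [abs_of_nonneg (sub_nonneg.2 hle)]
    calc ε * (τ₁ - τ₂) ≤ y₁ τ₂ - y₁ τ₁ := mul_sub_le_sub_of_hasDerivWithinAt hy₁ hε₁ hτ₂ hτ₁ hle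
      _ = y₁ τ₂ - y₂ τ₂ := by rw [hτ]
      _ ≤ _ := (le_abs_self _).trans (hstab τ₂ hτ₂)
  · rw [abs_sub_comm, abs_of_nonneg (sub_nonneg.2 hle)]
    calc ε * (τ₂ - τ₁) ≤ y₂ τ₁ - y₂ τ₂ := mul_sub_le_sub_of_hasDerivWithinAt hy₂ hε₂ hτ₁ hτ₂ hle
      _ = -(y₁ τ₁ - y₂ τ₁) := by rw [hτ]; ring
      _ ≤ _ := (neg_le_abs _).trans (hstab τ₁ hτ₁)

end Stability

theorem ContinuousOn.comp_neg_Icc {f : ℝ → ℝ} {h : ℝ} (hf : ContinuousOn f (Icc (-h) 0)) :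
    ContinuousOn (fun s => f (-s)) (Icc 0 h) :=
  hf.comp continuous_neg.continuousOn fun _ hs => ⟨neg_le_neg hs.2, neg_nonpos.2 hs.1⟩

theorem integral_abs_comp_neg_le {f : ℝ → ℝ} {h : ℝ} (hh : 0 ≤ h)
    (hf : ContinuousOn f (Icc (-h) 0)) (hf2 : IntervalIntegrable (fun t => f t ^ 2) volume (-h) 0) :
    ∫ s in 0..h, |f (-s)| ≤ √h * √(∫ u in (-h)..0, f u ^ 2) := by
  rw [integral_comp_neg (fun u => |f u|), neg_zero]
  simpa only [sub_neg_eq_add, zero_add] using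
    integral_abs_le_sqrt_mul_sqrt (neg_nonpos.2 hh) (hf.intervalIntegrable_of_Icc (neg_nonpos.2 hh))
      hf2

theorem tau_lipschitz_general
    (I : Set ℝ)
    (x₁ x₂ b ε K L h : ℝ) (hh : h = b / K) (hb : 0 < b)
    (hε : 0 < ε) (hεK : ε ≤ K) (hL : 0 ≤ L)
    (g : ℝ → ℝ → ℝ)
    (hgLip : ∀ x z x' z', |g x z - g x' z'| ≤ L * (|x - x'| + |z - z'|))
    (hbd : ∀ x ∈ Metric.closedBall x₂ b, ∀ z ∈ I, ε ≤ g x z ∧ g x z ≤ K)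
    -- prehistories `φ, ψ ∈ H^1(-h,0;ℝ)` with values in `I`, given by their continuous
    -- representatives together with their (weak) derivatives
    (φ φ' ψ ψ' : ℝ → ℝ)
    (hφftc : ∀ s ∈ Icc (-h) 0, ∀ t ∈ Icc (-h) 0, φ t = φ s + ∫ u in s..t, φ' u)
    (hψftc : ∀ s ∈ Icc (-h) 0, ∀ t ∈ Icc (-h) 0, ψ t = ψ s + ∫ u in s..t, ψ' u)
    (hφint : IntervalIntegrable φ' volume (-h) 0)
    (hψint : IntervalIntegrable ψ' volume (-h) 0)
    (hφ2 : IntervalIntegrable (fun t => (φ t - ψ t) ^ 2) volume (-h) 0)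
    (hφ'2 : IntervalIntegrable (fun t => (φ' t - ψ' t) ^ 2) volume (-h) 0)
    (hφI : ∀ t ∈ Icc (-h) 0, φ t ∈ I) (hψI : ∀ t ∈ Icc (-h) 0, ψ t ∈ I)
    -- the associated solutions of `y' = -g(y(s), ·(-s))`, `y(0) = x₂`
    (yφ yψ : ℝ → ℝ) (hyφ0 : yφ 0 = x₂) (hyψ0 : yψ 0 = x₂)
    (hyφball : ∀ s ∈ Icc (0 : ℝ) h, yφ s ∈ Metric.closedBall x₂ b)
    (hyψball : ∀ s ∈ Icc (0 : ℝ) h, yψ s ∈ Metric.closedBall x₂ b)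
    (hyφ : ∀ s ∈ Icc (0 : ℝ) h, HasDerivWithinAt yφ (-(g (yφ s) (φ (-s)))) (Icc (0 : ℝ) h) s)
    (hyψ : ∀ s ∈ Icc (0 : ℝ) h, HasDerivWithinAt yψ (-(g (yψ s) (ψ (-s)))) (Icc (0 : ℝ) h) s)
    -- the delays defined by `y_φ(τ(φ)) = x₁`
    (τφ τψ : ℝ) (hτφ : τφ ∈ Icc (0 : ℝ) h) (hτψ : τψ ∈ Icc (0 : ℝ) h)
    (hτφx : yφ τφ = x₁) (hτψx : yψ τψ = x₁) :
    ε * |τφ - τψ| ≤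
      (L ^ 2 * (Real.sqrt h + (Real.sqrt h)⁻¹) * (∫ t in (0 : ℝ)..h, t * Real.exp (L * t)) +
          L * Real.sqrt h) *
        Real.sqrt ((∫ u in (-h)..0, (φ u - ψ u) ^ 2) + ∫ u in (-h)..0, (φ' u - ψ' u) ^ 2) := by
  have hh₀ : 0 < h := hh ▸ div_pos hb (hε.trans_le hεK)
  set N := √((∫ u in (-h)..0, (φ u - ψ u) ^ 2) + ∫ u in (-h)..0, (φ' u - ψ' u) ^ 2)
  have hφc := continuousOn_of_forall_eq_add_integral (neg_nonpos.2 hh₀.le) hφftc hφint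
  have hψc := continuousOn_of_forall_eq_add_integral (neg_nonpos.2 hh₀.le) hψftc hψint
  have hsup : ∀ s ∈ Icc 0 h, |φ (-s) - ψ (-s)| ≤ (√h + (√h)⁻¹) * N := fun s hs => by
    simpa only [sub_neg_eq_add, zero_add] using abs_le_of_forall_eq_add_integral
      (neg_lt_zero.2 hh₀) (forall_eq_add_integral_sub (neg_nonpos.2 hh₀.le) hφftc hψftc hφint
        hψint) (hφint.sub hψint) hφ2 hφ'2 ⟨neg_le_neg hs.2, neg_nonpos.2 hs.1⟩
  have hL1 : ∫ s in 0..h, |φ (-s) - ψ (-s)| ≤ √h * N :=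
    (integral_abs_comp_neg_le (f := fun u => φ u - ψ u) hh₀.le (hφc.sub hψc) hφ2).trans <| by
      gcongr
      exact Real.sqrt_le_sqrt (le_add_of_nonneg_right
        (integral_nonneg (neg_nonpos.2 hh₀.le) fun u _ => sq_nonneg _))
  have hεφ : ∀ s ∈ Ioo 0 h, ε ≤ g (yφ s) (φ (-s)) := fun s ⟨hs₀, hsh⟩ =>
    (hbd _ (hyφball s ⟨hs₀.le, hsh.le⟩) _ (hφI _ ⟨neg_le_neg hsh.le, neg_nonpos.2 hs₀.le⟩)).1
  have hεψ : ∀ s ∈ Ioo 0 h, ε ≤ g (yψ s) (ψ (-s)) := fun s ⟨hs₀, hsh⟩ =>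
    (hbd _ (hyψball s ⟨hs₀.le, hsh.le⟩) _ (hψI _ ⟨neg_le_neg hsh.le, neg_nonpos.2 hs₀.le⟩)).1
  calc ε * |τφ - τψ| ≤ L ^ 2 * ((√h + (√h)⁻¹) * N) * (∫ t in (0 : ℝ)..h, t * Real.exp (L * t)) +
        L * ∫ s in 0..h, |φ (-s) - ψ (-s)| :=
      mul_abs_sub_le_of_apply_eq hL hgLip hyφ hyψ (hyφ0.trans hyψ0.symm) hsup
        hφc.comp_neg_Icc hψc.comp_neg_Icc hεφ hεψ hτφ hτψ (hτφx.trans hτψx.symm)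
    _ ≤ L ^ 2 * ((√h + (√h)⁻¹) * N) * (∫ t in (0 : ℝ)..h, t * Real.exp (L * t)) +
        L * (√h * N) := by gcongr
    _ = _ := by ring

/-- Lemma 3.8: the delay function `τ : H^1(-h,0;ℝ) → [0,h]`, defined implicitly by
`y_φ(τ(φ)) = x₁`, is Lipschitz continuous with respect to the `H^1` norm:
`ε |τ(φ) - τ(ψ)| ≤ (L²(h^{1/2}+h^{-1/2}) ∫₀^h t e^{Lt} dt + L√h) ‖φ-ψ‖_{H^1}`. -/
theorem tau_lipschitz
    (I : Set ℝ) (hIopen : IsOpen I)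
    (x₁ x₂ b ε K L h : ℝ) (hh : h = b / K) (hb : 0 < b)
    (hε : 0 < ε) (hεK : ε ≤ K) (hL : 0 ≤ L)
    (hgap : x₂ - x₁ ∈ Ioo 0 (b / K * ε))
    (g : ℝ → ℝ → ℝ)
    (hgLip : ∀ x z x' z', |g x z - g x' z'| ≤ L * (|x - x'| + |z - z'|))
    (hbd : ∀ x ∈ Metric.closedBall x₂ b, ∀ z ∈ I, ε ≤ g x z ∧ g x z ≤ K)
    -- prehistories `φ, ψ ∈ H^1(-h,0;ℝ)` with values in `I`, given by their continuous
    -- representatives together with their (weak) derivatives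
    (φ φ' ψ ψ' : ℝ → ℝ)
    (hφftc : ∀ s ∈ Icc (-h) 0, ∀ t ∈ Icc (-h) 0, φ t = φ s + ∫ u in s..t, φ' u)
    (hψftc : ∀ s ∈ Icc (-h) 0, ∀ t ∈ Icc (-h) 0, ψ t = ψ s + ∫ u in s..t, ψ' u)
    (hφint : IntervalIntegrable φ' volume (-h) 0)
    (hψint : IntervalIntegrable ψ' volume (-h) 0)
    (hφ2 : IntervalIntegrable (fun t => (φ t - ψ t) ^ 2) volume (-h) 0)
    (hφ'2 : IntervalIntegrable (fun t => (φ' t - ψ' t) ^ 2) volume (-h) 0)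
    (hφI : ∀ t ∈ Icc (-h) 0, φ t ∈ I) (hψI : ∀ t ∈ Icc (-h) 0, ψ t ∈ I)
    -- the associated solutions of `y' = -g(y(s), ·(-s))`, `y(0) = x₂`
    (yφ yψ : ℝ → ℝ) (hyφ0 : yφ 0 = x₂) (hyψ0 : yψ 0 = x₂)
    (hyφball : ∀ s ∈ Icc (0 : ℝ) h, yφ s ∈ Metric.closedBall x₂ b)
    (hyψball : ∀ s ∈ Icc (0 : ℝ) h, yψ s ∈ Metric.closedBall x₂ b)
    (hyφ : ∀ s ∈ Icc (0 : ℝ) h, HasDerivWithinAt yφ (-(g (yφ s) (φ (-s)))) (Icc (0 : ℝ) h) s)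
    (hyψ : ∀ s ∈ Icc (0 : ℝ) h, HasDerivWithinAt yψ (-(g (yψ s) (ψ (-s)))) (Icc (0 : ℝ) h) s)
    -- the delays defined by `y_φ(τ(φ)) = x₁`
    (τφ τψ : ℝ) (hτφ : τφ ∈ Icc (0 : ℝ) h) (hτψ : τψ ∈ Icc (0 : ℝ) h)
    (hτφx : yφ τφ = x₁) (hτψx : yψ τψ = x₁) :
    ε * |τφ - τψ| ≤
      (L ^ 2 * (Real.sqrt h + (Real.sqrt h)⁻¹) * (∫ t in (0 : ℝ)..h, t * Real.exp (L * t)) +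
          L * Real.sqrt h) *
        Real.sqrt ((∫ u in (-h)..0, (φ u - ψ u) ^ 2) + ∫ u in (-h)..0, (φ' u - ψ' u) ^ 2) :=
  tau_lipschitz_general I x₁ x₂ b ε K L h hh hb hε hεK hL g hgLip hbd φ φ' ψ ψ' hφftc hψftc hφint
    hψint hφ2 hφ'2 hφI hψI yφ yψ hyφ0 hyψ0 hyφball hyψball hyφ hyψ τφ τψ hτφ hτψ hτφx hτψx
end

section
/- Let G(φ) := ∫₀^{τ(φ)} (d - D₁g)(y(s,φ), φ(-s)) ds. If d - D₁g is Lipschitz with constant L_k and bounded by M_k on a suitable compact set N containing all relevant arguments, τ is Lipschitz with constant L_τ, and y is Lipschitz in the prehistory with constant L_y, then for φ, ψ ∈ H^1(-h,0;ℝ) ∩ B_{C}(φ₀,δ): |G(φ) - G(ψ)| ≤ (h L_k √(L_y² + (h^{1/2}+h^{-1/2})²) + M_k L_τ) ‖φ - ψ‖_{H^1(-h,0;ℝ)}. -/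
/-!
Split `G(φ) - G(ψ)` as `∫₀^{τψ} (k(yφ, φ(-·)) - k(yψ, ψ(-·))) + ∫_{τψ}^{τφ} k(yφ, φ(-·))`.
The second piece is at most `M_k |τφ - τψ|`. For the first, the Lipschitz bound on `k` needs a
sup-norm bound on `w = φ - ψ`: at a point `s` where `w²` lies below its mean,
`|w s| ≤ h^{-1/2} ‖w‖_{L²}`, and integrating `w'` from `s` adds at most
`∫|w'| ≤ h^{1/2} ‖w'‖_{L²}` (Jensen), so `‖w‖_∞ ≤ (h^{1/2} + h^{-1/2}) ‖w‖_{H¹}`.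
-/

open MeasureTheory Set

lemma sq_intervalIntegral_abs_le {f : ℝ → ℝ} {a b : ℝ} (hab : a ≤ b)
    (hf : IntervalIntegrable f volume a b)
    (hf2 : IntervalIntegrable (fun x => f x ^ 2) volume a b) :
    (∫ x in a..b, |f x|) ^ 2 ≤ (b - a) * ∫ x in a..b, f x ^ 2 := by
  rcases hab.eq_or_lt with rfl | hlt
  · simp
  have hL : 0 < b - a := sub_pos.2 hlt
  have hvol : volume (uIoc a b) ≠ 0 := by simp [uIoc_of_le hab, hlt]
  have jensen := (Even.convexOn_pow (𝕜 := ℝ) even_two).map_set_average_le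
    (continuous_pow 2).continuousOn isClosed_univ hvol measure_Ioc_lt_top.ne (by simp) hf.abs.def'
    (by simpa [Function.comp_def] using hf2.def')
  simp only [sq_abs] at jensen
  rw [interval_average_eq_div, interval_average_eq_div, div_pow,
    div_le_div_iff₀ (by positivity) hL] at jensen
  nlinarith

lemma exists_mul_sq_le_intervalIntegral_sq {w : ℝ → ℝ} {a b : ℝ} (hab : a < b)
    (hw2 : IntervalIntegrable (fun x => w x ^ 2) volume a b) :
    ∃ s ∈ Icc a b, (b - a) * w s ^ 2 ≤ ∫ x in a..b, w x ^ 2 := by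
  have hvol : volume (uIoc a b) ≠ 0 := by simp [uIoc_of_le hab.le, hab]
  obtain ⟨s, hs, hle⟩ := exists_le_setAverage hvol measure_Ioc_lt_top.ne hw2.def'
  rw [uIoc_of_le hab.le] at hs
  refine ⟨s, Ioc_subset_Icc_self hs, ?_⟩
  rwa [interval_average_eq_div, le_div_iff₀ (sub_pos.2 hab), mul_comm] at hle

lemma abs_intervalIntegral_le_integral_abs_of_mem_Icc {f : ℝ → ℝ} {a b s t : ℝ}
    (hf : IntervalIntegrable f volume a b) (hs : s ∈ Icc a b) (ht : t ∈ Icc a b) :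
    |∫ u in s..t, f u| ≤ ∫ u in a..b, |f u| := by
  wlog hst : s ≤ t generalizing s t
  · rw [intervalIntegral.integral_symm, abs_neg]
    exact this ht hs (le_of_not_ge hst)
  calc |∫ u in s..t, f u| ≤ ∫ u in s..t, |f u| := intervalIntegral.abs_integral_le_integral_abs hst
    _ ≤ ∫ u in a..b, |f u| := intervalIntegral.integral_mono_interval hs.1 hst ht.2
        (Filter.Eventually.of_forall fun _ => abs_nonneg _) hf.abs

/-- The `H¹(a, b)` norm of `w`, given a weak derivative `w'` of `w`. -/
noncomputable def h1Norm (a b : ℝ) (w w' : ℝ → ℝ) : ℝ :=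
  √((∫ u in a..b, w u ^ 2) + ∫ u in a..b, w' u ^ 2)

lemma abs_le_mul_h1Norm {w w' : ℝ → ℝ} {a b t : ℝ} (hab : a < b)
    (hftc : ∀ s ∈ Icc a b, ∀ t ∈ Icc a b, w t = w s + ∫ u in s..t, w' u)
    (hw' : IntervalIntegrable w' volume a b)
    (hw2 : IntervalIntegrable (fun u => w u ^ 2) volume a b)
    (hw'2 : IntervalIntegrable (fun u => w' u ^ 2) volume a b) (ht : t ∈ Icc a b) :
    |w t| ≤ (√(b - a) + (√(b - a))⁻¹) * h1Norm a b w w' := by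
  have hL : 0 < √(b - a) := Real.sqrt_pos.2 (sub_pos.2 hab)
  have hI : 0 ≤ ∫ u in a..b, w u ^ 2 :=
    intervalIntegral.integral_nonneg hab.le fun _ _ => sq_nonneg _
  have hI' : 0 ≤ ∫ u in a..b, w' u ^ 2 :=
    intervalIntegral.integral_nonneg hab.le fun _ _ => sq_nonneg _
  obtain ⟨s, hs, hws⟩ := exists_mul_sq_le_intervalIntegral_sq hab hw2
  have hbase : |w s| ≤ (√(b - a))⁻¹ * h1Norm a b w w' := by
    rw [h1Norm, inv_mul_eq_div, le_div_iff₀ hL, ← Real.sqrt_sq_eq_abs,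
      ← Real.sqrt_mul (sq_nonneg _)]
    exact Real.sqrt_le_sqrt (by linarith)
  have hvar : ∫ u in a..b, |w' u| ≤ √(b - a) * h1Norm a b w w' := by
    rw [h1Norm, ← Real.sqrt_mul (sub_pos.2 hab).le]
    refine (le_abs_self _).trans (Real.abs_le_sqrt ?_)
    refine (sq_intervalIntegral_abs_le hab.le hw' hw'2).trans ?_
    exact mul_le_mul_of_nonneg_left (by linarith) (sub_pos.2 hab).le
  calc |w t| = |w s + ∫ u in s..t, w' u| := by rw [← hftc s hs t ht]
    _ ≤ |w s| + |∫ u in s..t, w' u| := abs_add_le _ _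
    _ ≤ (√(b - a))⁻¹ * h1Norm a b w w' + √(b - a) * h1Norm a b w w' :=
        add_le_add hbase ((abs_intervalIntegral_le_integral_abs_of_mem_Icc hw' hs ht).trans hvar)
    _ = (√(b - a) + (√(b - a))⁻¹) * h1Norm a b w w' := by ring

lemma sqrt_sq_add_sq_le {x y α β S : ℝ} (hS : 0 ≤ S) (hx : |x| ≤ α * S) (hy : |y| ≤ β * S) :
    √(x ^ 2 + y ^ 2) ≤ √(α ^ 2 + β ^ 2) * S := by
  have hx2 : x ^ 2 ≤ (α * S) ^ 2 := sq_abs x ▸ pow_le_pow_left₀ (abs_nonneg x) hx 2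
  have hy2 : y ^ 2 ≤ (β * S) ^ 2 := sq_abs y ▸ pow_le_pow_left₀ (abs_nonneg y) hy 2
  calc √(x ^ 2 + y ^ 2) ≤ √((α ^ 2 + β ^ 2) * S ^ 2) := Real.sqrt_le_sqrt (by linarith)
    _ = √(α ^ 2 + β ^ 2) * S := by rw [Real.sqrt_mul (by positivity), Real.sqrt_sq hS]

lemma abs_intervalIntegral_sub_intervalIntegral_le {f g : ℝ → ℝ} {a b σ τ B M : ℝ}
    (hf : IntervalIntegrable f volume a b) (hg : IntervalIntegrable g volume a b)
    (hσ : σ ∈ Icc a b) (hτ : τ ∈ Icc a b)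
    (hfg : ∀ s ∈ Icc a b, |f s - g s| ≤ B) (hfM : ∀ s ∈ Icc a b, |f s| ≤ M) :
    |(∫ s in a..σ, f s) - ∫ s in a..τ, g s| ≤ B * (b - a) + M * |σ - τ| := by
  have hsub : ∀ {s t}, s ∈ Icc a b → t ∈ Icc a b → uIcc s t ⊆ uIcc a b := fun hs ht =>
    uIcc_subset_uIcc (Icc_subset_uIcc hs) (Icc_subset_uIcc ht)
  have ha : a ∈ Icc a b := left_mem_Icc.2 (hτ.1.trans hτ.2)
  have hfτ := hf.mono_set (hsub ha hτ)
  have hgτ := hg.mono_set (hsub ha hτ)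
  have hfστ := hf.mono_set (hsub hτ hσ)
  have hmem : ∀ {s t}, s ∈ Icc a b → t ∈ Icc a b → ∀ u ∈ uIoc s t, u ∈ Icc a b :=
    fun hs ht u hu =>
    (uIcc_of_le ha.2).subset (hsub hs ht (uIoc_subset_uIcc hu))
  have hsplit : (∫ s in a..σ, f s) - ∫ s in a..τ, g s =
      (∫ s in a..τ, (f s - g s)) + ∫ s in τ..σ, f s := by
    rw [intervalIntegral.integral_sub hfτ hgτ,
      ← intervalIntegral.integral_add_adjacent_intervals hfτ hfστ]
    ring
  have hdiff : |∫ s in a..τ, (f s - g s)| ≤ B * (b - a) := by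
    calc |∫ s in a..τ, (f s - g s)| ≤ B * |τ - a| := by
          simpa only [Real.norm_eq_abs] using intervalIntegral.norm_integral_le_of_norm_le_const
            (f := fun s => f s - g s) fun u hu =>
              (Real.norm_eq_abs _).trans_le (hfg u (hmem ha hτ u hu))
      _ ≤ B * (b - a) := by
          rw [abs_of_nonneg (sub_nonneg.2 hτ.1)]
          exact mul_le_mul_of_nonneg_left (by linarith [hτ.2]) ((abs_nonneg _).trans (hfg a ha))
  have htail : |∫ s in τ..σ, f s| ≤ M * |σ - τ| := by
    simpa only [Real.norm_eq_abs] using intervalIntegral.norm_integral_le_of_norm_le_const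
      fun u hu => (Real.norm_eq_abs _).trans_le (hfM u (hmem hτ hσ u hu))
  rw [hsplit]
  exact (abs_add_le _ _).trans (add_le_add hdiff htail)

theorem G_integral_lipschitz_general
    (h L_k M_k L_τ L_y : ℝ) (hh : 0 < h)
    (hLk : 0 ≤ L_k) (hMk : 0 ≤ M_k)
    (k : ℝ → ℝ → ℝ) (N : Set (ℝ × ℝ))
    (hkLip : ∀ p ∈ N, ∀ q ∈ N,
      |k p.1 p.2 - k q.1 q.2| ≤ L_k * Real.sqrt ((p.1 - q.1) ^ 2 + (p.2 - q.2) ^ 2))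
    (hkBd : ∀ p ∈ N, |k p.1 p.2| ≤ M_k)
    (φ φ' ψ ψ' : ℝ → ℝ)
    -- `φ, ψ` are `H^1` functions (continuous representatives with weak derivatives):
    (hφftc : ∀ s ∈ Icc (-h) 0, ∀ t ∈ Icc (-h) 0, φ t = φ s + ∫ u in s..t, φ' u)
    (hψftc : ∀ s ∈ Icc (-h) 0, ∀ t ∈ Icc (-h) 0, ψ t = ψ s + ∫ u in s..t, ψ' u)
    (hφint : IntervalIntegrable φ' volume (-h) 0)
    (hψint : IntervalIntegrable ψ' volume (-h) 0)
    (hd2 : IntervalIntegrable (fun t => (φ t - ψ t) ^ 2) volume (-h) 0)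
    (hd'2 : IntervalIntegrable (fun t => (φ' t - ψ' t) ^ 2) volume (-h) 0)
    -- the associated maturation solutions and delays:
    (yφ yψ : ℝ → ℝ) (τφ τψ : ℝ)
    (hτφ : τφ ∈ Icc (0 : ℝ) h) (hτψ : τψ ∈ Icc (0 : ℝ) h)
    (hNφ : ∀ s ∈ Icc (0 : ℝ) h, (yφ s, φ (-s)) ∈ N)
    (hNψ : ∀ s ∈ Icc (0 : ℝ) h, (yψ s, ψ (-s)) ∈ N)
    (hkφint : IntervalIntegrable (fun s => k (yφ s) (φ (-s))) volume 0 h)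
    (hkψint : IntervalIntegrable (fun s => k (yψ s) (ψ (-s))) volume 0 h)
    -- Lipschitz continuity of `τ` and of `y` in the prehistory:
    (hτLip : |τφ - τψ| ≤
      L_τ * Real.sqrt ((∫ u in (-h)..0, (φ u - ψ u) ^ 2) + ∫ u in (-h)..0, (φ' u - ψ' u) ^ 2))
    (hyLip : ∀ s ∈ Icc (0 : ℝ) h, |yφ s - yψ s| ≤
      L_y * Real.sqrt ((∫ u in (-h)..0, (φ u - ψ u) ^ 2) + ∫ u in (-h)..0, (φ' u - ψ' u) ^ 2)) :
    |(∫ s in (0 : ℝ)..τφ, k (yφ s) (φ (-s))) - ∫ s in (0 : ℝ)..τψ, k (yψ s) (ψ (-s))| ≤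
      (h * L_k * Real.sqrt (L_y ^ 2 + (Real.sqrt h + (Real.sqrt h)⁻¹) ^ 2) + M_k * L_τ) *
        Real.sqrt ((∫ u in (-h)..0, (φ u - ψ u) ^ 2) + ∫ u in (-h)..0, (φ' u - ψ' u) ^ 2) := by
  set S := Real.sqrt ((∫ u in (-h)..0, (φ u - ψ u) ^ 2) + ∫ u in (-h)..0, (φ' u - ψ' u) ^ 2)
  set C := Real.sqrt h + (Real.sqrt h)⁻¹
  have hwftc : ∀ s ∈ Icc (-h) 0, ∀ t ∈ Icc (-h) 0,
      φ t - ψ t = (φ s - ψ s) + ∫ u in s..t, (φ' u - ψ' u) := by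
    intro s hs t ht
    have hst := uIcc_subset_uIcc (Icc_subset_uIcc hs) (Icc_subset_uIcc ht)
    rw [intervalIntegral.integral_sub (hφint.mono_set hst) (hψint.mono_set hst),
      hφftc s hs t ht, hψftc s hs t ht]
    ring
  have hsup : ∀ s ∈ Icc 0 h, |φ (-s) - ψ (-s)| ≤ C * S := fun s hs => by
    have := abs_le_mul_h1Norm (neg_lt_zero.2 hh) hwftc (hφint.sub hψint) hd2 hd'2
      (t := -s) ⟨neg_le_neg hs.2, neg_nonpos.2 hs.1⟩
    rwa [sub_neg_eq_add, zero_add] at this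
  have hk : ∀ s ∈ Icc 0 h,
      |k (yφ s) (φ (-s)) - k (yψ s) (ψ (-s))| ≤ L_k * √(L_y ^ 2 + C ^ 2) * S :=
    fun s hs => calc
      _ ≤ L_k * √((yφ s - yψ s) ^ 2 + (φ (-s) - ψ (-s)) ^ 2) := hkLip _ (hNφ s hs) _ (hNψ s hs)
      _ ≤ L_k * √(L_y ^ 2 + C ^ 2) * S := by
        rw [mul_assoc]
        exact mul_le_mul_of_nonneg_left
          (sqrt_sq_add_sq_le (Real.sqrt_nonneg _) (hyLip s hs) (hsup s hs)) hLk
  calc _ ≤ L_k * √(L_y ^ 2 + C ^ 2) * S * (h - 0) + M_k * |τφ - τψ| :=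
        abs_intervalIntegral_sub_intervalIntegral_le hkφint hkψint hτφ hτψ hk
          fun s hs => hkBd _ (hNφ s hs)
    _ ≤ L_k * √(L_y ^ 2 + C ^ 2) * S * h + M_k * (L_τ * S) := by rw [sub_zero]; gcongr
    _ = (h * L_k * √(L_y ^ 2 + C ^ 2) + M_k * L_τ) * S := by ring

/-- Key estimate in Lemma 3.10: for `G(φ) = ∫₀^{τ(φ)} (d - D₁g)(y(s,φ), φ(-s)) ds`
(here `k := d - D₁g`), if `k` is `L_k`-Lipschitz and bounded by `M_k` on a set `N`
containing all relevant arguments, `τ` is `L_τ`-Lipschitz and `y` is `L_y`-Lipschitz in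
the prehistory, then for `φ, ψ ∈ H^1(-h,0;ℝ) ∩ B_C(φ₀,δ)`:
`|G(φ) - G(ψ)| ≤ (h L_k √(L_y² + (h^{1/2}+h^{-1/2})²) + M_k L_τ) ‖φ-ψ‖_{H^1}`. -/
theorem G_integral_lipschitz
    (h δ L_k M_k L_τ L_y : ℝ) (hh : 0 < h) (hδ : 0 < δ)
    (hLk : 0 ≤ L_k) (hMk : 0 ≤ M_k) (hLτ : 0 ≤ L_τ) (hLy : 0 ≤ L_y)
    (k : ℝ → ℝ → ℝ) (N : Set (ℝ × ℝ))
    (hkLip : ∀ p ∈ N, ∀ q ∈ N,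
      |k p.1 p.2 - k q.1 q.2| ≤ L_k * Real.sqrt ((p.1 - q.1) ^ 2 + (p.2 - q.2) ^ 2))
    (hkBd : ∀ p ∈ N, |k p.1 p.2| ≤ M_k)
    (φ₀ φ φ' ψ ψ' : ℝ → ℝ)
    -- `φ, ψ` are `H^1` functions (continuous representatives with weak derivatives):
    (hφftc : ∀ s ∈ Icc (-h) 0, ∀ t ∈ Icc (-h) 0, φ t = φ s + ∫ u in s..t, φ' u)
    (hψftc : ∀ s ∈ Icc (-h) 0, ∀ t ∈ Icc (-h) 0, ψ t = ψ s + ∫ u in s..t, ψ' u)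
    (hφint : IntervalIntegrable φ' volume (-h) 0)
    (hψint : IntervalIntegrable ψ' volume (-h) 0)
    (hd2 : IntervalIntegrable (fun t => (φ t - ψ t) ^ 2) volume (-h) 0)
    (hd'2 : IntervalIntegrable (fun t => (φ' t - ψ' t) ^ 2) volume (-h) 0)
    -- `φ, ψ ∈ B_{C([-h,0])}(φ₀, δ)`:
    (hφball : ∀ t ∈ Icc (-h) 0, |φ t - φ₀ t| < δ)
    (hψball : ∀ t ∈ Icc (-h) 0, |ψ t - φ₀ t| < δ)
    -- the associated maturation solutions and delays:
    (yφ yψ : ℝ → ℝ) (τφ τψ : ℝ)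
    (hτφ : τφ ∈ Icc (0 : ℝ) h) (hτψ : τψ ∈ Icc (0 : ℝ) h)
    (hNφ : ∀ s ∈ Icc (0 : ℝ) h, (yφ s, φ (-s)) ∈ N)
    (hNψ : ∀ s ∈ Icc (0 : ℝ) h, (yψ s, ψ (-s)) ∈ N)
    (hkφint : IntervalIntegrable (fun s => k (yφ s) (φ (-s))) volume 0 h)
    (hkψint : IntervalIntegrable (fun s => k (yψ s) (ψ (-s))) volume 0 h)
    -- Lipschitz continuity of `τ` and of `y` in the prehistory:
    (hτLip : |τφ - τψ| ≤
      L_τ * Real.sqrt ((∫ u in (-h)..0, (φ u - ψ u) ^ 2) + ∫ u in (-h)..0, (φ' u - ψ' u) ^ 2))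
    (hyLip : ∀ s ∈ Icc (0 : ℝ) h, |yφ s - yψ s| ≤
      L_y * Real.sqrt ((∫ u in (-h)..0, (φ u - ψ u) ^ 2) + ∫ u in (-h)..0, (φ' u - ψ' u) ^ 2)) :
    |(∫ s in (0 : ℝ)..τφ, k (yφ s) (φ (-s))) - ∫ s in (0 : ℝ)..τψ, k (yψ s) (ψ (-s))| ≤
      (h * L_k * Real.sqrt (L_y ^ 2 + (Real.sqrt h + (Real.sqrt h)⁻¹) ^ 2) + M_k * L_τ) *
        Real.sqrt ((∫ u in (-h)..0, (φ u - ψ u) ^ 2) + ∫ u in (-h)..0, (φ' u - ψ' u) ^ 2) :=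
  G_integral_lipschitz_general h L_k M_k L_τ L_y hh hLk hMk k N hkLip hkBd φ φ' ψ ψ' hφftc hψftc
    hφint hψint hd2 hd'2 yφ yψ τφ τψ hτφ hτψ hNφ hNψ hkφint hkψint hτLip hyLip
end
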